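/- Estimate for the second auxiliary functional of the Fourier-law system: define K₂(t) = ρ₁ Re(iξ ū v) + ρ₂ Re(iξ y z̄). Then for every ε > 0 there exists a constant C(ε) > 0, depending only on ε and the system parameters, such that for all t ≥ 0: (d/dt)K₂(t) + ρ₁(1−ε)ξ²|u|² + a(1−ε)ξ²|z|² ≤ C(ε)(1+ξ²)|v|² + C(ε)(1+ξ²)|y|² + C(ε)ξ²|θ|² + C(ε)ξ⁴|∫₀^∞ g(s)η(t,s)ds|². -/

import Mathlib

/-!
Differentiating `K₂` and substituting the equations produces the good terms `-ρ₁ ξ²|u|²` and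
`-a ξ²|z|²`, terms in `|v|²` and `|y|²` only, and couplings of `u` with `y` and of `z` with `v`,
`θ` and `G = ∫ g η`. Young's inequality with weight `ε` (resp. `a ε`) absorbs the couplings of `u`
(resp. `z`) into an `ε`-fraction of the good terms.
-/

open Complex ComplexConjugate

lemma mul_le_sq_add_sq_div {p : ℝ} (hp : 0 < p) (x y : ℝ) :
    x * y ≤ p * x ^ 2 + y ^ 2 / (4 * p) := by
  have hsq : p * x ^ 2 + y ^ 2 / (4 * p) - x * y = (2 * p * x - y) ^ 2 / (4 * p) := by
    field_simp; ring
  have : 0 ≤ (2 * p * x - y) ^ 2 / (4 * p) := by positivity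
  linarith

lemma re_mul_le_sq_add_sq_div {p : ℝ} (hp : 0 < p) (z w : ℂ) :
    (z * w).re ≤ p * ‖z‖ ^ 2 + ‖w‖ ^ 2 / (4 * p) :=
  calc (z * w).re ≤ ‖z‖ * ‖w‖ := (re_le_norm _).trans_eq (norm_mul z w)
    _ ≤ _ := mul_le_sq_add_sq_div hp _ _

lemma norm_add_add_sq_le {E : Type*} [SeminormedAddGroup E] (a b c : E) :
    ‖a + b + c‖ ^ 2 ≤ 3 * (‖a‖ ^ 2 + ‖b‖ ^ 2 + ‖c‖ ^ 2) := by
  have := norm_add₃_le (a := a) (b := b) (c := c)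
  have := norm_nonneg (a + b + c)
  nlinarith [sq_nonneg (‖a‖ - ‖b‖), sq_nonneg (‖b‖ - ‖c‖), sq_nonneg (‖a‖ - ‖c‖)]

noncomputable def rateK₂ (ρ₁ ρ₂ k a m δ ξ : ℝ) (u v z y θ G : ℂ) : ℝ :=
  k * ξ ^ 2 * ‖v‖ ^ 2 + ρ₂ * ξ ^ 2 * ‖y‖ ^ 2 - ρ₁ * ξ ^ 2 * ‖u‖ ^ 2 - a * ξ ^ 2 * ‖z‖ ^ 2
    + ρ₁ * (ξ * conj u * (-I * y)).re
    + (ξ * conj z * (I * k * v - I * m * ξ ^ 2 * G + δ * ξ * θ)).re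

lemma rateK₂_add_le {ρ₁ ρ₂ k a m δ ε : ℝ} (hρ₁ : 0 ≤ ρ₁) (ha : 0 < a) (hε : 0 < ε)
    (ξ : ℝ) (u v z y θ G : ℂ) :
    rateK₂ ρ₁ ρ₂ k a m δ ξ u v z y θ G + ρ₁ * (1 - ε) * ξ ^ 2 * ‖u‖ ^ 2
        + a * (1 - ε) * ξ ^ 2 * ‖z‖ ^ 2
      ≤ (k * ξ ^ 2 + 3 / (4 * a * ε) * k ^ 2) * ‖v‖ ^ 2 + (ρ₂ * ξ ^ 2 + ρ₁ / (4 * ε)) * ‖y‖ ^ 2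
        + 3 / (4 * a * ε) * δ ^ 2 * ξ ^ 2 * ‖θ‖ ^ 2
        + 3 / (4 * a * ε) * m ^ 2 * ξ ^ 4 * ‖G‖ ^ 2 := by
  have hu : ρ₁ * (ξ * conj u * (-I * y)).re ≤ ρ₁ * (ε * (ξ ^ 2 * ‖u‖ ^ 2) + ‖y‖ ^ 2 / (4 * ε)) := by
    refine mul_le_mul_of_nonneg_left ((re_mul_le_sq_add_sq_div hε _ _).trans_eq ?_) hρ₁
    simp [mul_pow]
  -- one Young inequality for all three couplings with `z`; hence the factor 3 in the constant
  have hz := re_mul_le_sq_add_sq_div (mul_pos ha hε) (ξ * conj z)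
    (I * k * v - I * m * ξ ^ 2 * G + δ * ξ * θ)
  have hW := norm_add_add_sq_le (I * k * v) (-(I * m * ξ ^ 2 * G)) (δ * ξ * θ)
  simp only [norm_mul, norm_neg, norm_I, norm_real, norm_pow, Real.norm_eq_abs, mul_pow, sq_abs,
    one_mul, norm_conj, ← sub_eq_add_neg] at hz hW
  have hW' := div_le_div_of_nonneg_right hW (by positivity : (0:ℝ) ≤ 4 * (a * ε))
  unfold rateK₂
  linear_combination hu + hz + hW'

lemma exists_rateK₂_add_le {ρ₁ ρ₂ k a m δ ε : ℝ} (hρ₁ : 0 < ρ₁) (ha : 0 < a) (hε : 0 < ε) :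
    ∃ C > 0, ∀ (ξ : ℝ) (u v z y θ G : ℂ),
      rateK₂ ρ₁ ρ₂ k a m δ ξ u v z y θ G + ρ₁ * (1 - ε) * ξ ^ 2 * ‖u‖ ^ 2
          + a * (1 - ε) * ξ ^ 2 * ‖z‖ ^ 2
        ≤ C * (1 + ξ ^ 2) * ‖v‖ ^ 2 + C * (1 + ξ ^ 2) * ‖y‖ ^ 2 + C * ξ ^ 2 * ‖θ‖ ^ 2
          + C * ξ ^ 4 * ‖G‖ ^ 2 := by
  set L := 3 / (4 * a * ε)
  set C := |k| + |ρ₂| + ρ₁ / (4 * ε) + L * k ^ 2 + L * m ^ 2 + L * δ ^ 2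
  have hk := abs_nonneg k
  have hρ₂ := abs_nonneg ρ₂
  have hρ₁ε : 0 ≤ ρ₁ / (4 * ε) := by positivity
  have hLk : 0 ≤ L * k ^ 2 := by positivity
  have hLm : 0 ≤ L * m ^ 2 := by positivity
  have hLδ : 0 ≤ L * δ ^ 2 := by positivity
  refine ⟨C, by positivity, fun ξ u v z y θ G =>
    (rateK₂_add_le hρ₁.le ha hε ξ u v z y θ G).trans ?_⟩
  have hξ := sq_nonneg ξ
  gcongr ?_ * _ + ?_ * _ + ?_ * _ * _ + ?_ * _ * _
  · nlinarith [le_abs_self k]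
  · nlinarith [le_abs_self ρ₂]
  · linarith
  · linarith

lemma hasDerivAt_re_mul {f g : ℝ → ℂ} {f' g' : ℂ} {t : ℝ} (hf : HasDerivAt f f' t)
    (hg : HasDerivAt g g' t) :
    HasDerivAt (fun r => (f r * g r).re) (f' * g t + f t * g').re t :=
  reCLM.hasFDerivAt.comp_hasDerivAt t (hf.mul hg)

lemma hasDerivAt_K₂ {ρ₁ ρ₂ k a m δ ξ t : ℝ} {u v z y θ : ℝ → ℂ} {G : ℂ} (hρ₁ : ρ₁ ≠ 0)
    (hρ₂ : ρ₂ ≠ 0) (hv : HasDerivAt v (I * ξ * u t - y t) t)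
    (hu : HasDerivAt u (I * k * ξ * v t / ρ₁) t) (hz : HasDerivAt z (I * ξ * y t) t)
    (hy : HasDerivAt y ((I * a * ξ * z t - m * ξ ^ 2 * G + k * v t - I * δ * ξ * θ t) / ρ₂) t) :
    HasDerivAt (fun r => ρ₁ * (I * ξ * conj (u r) * v r).re + ρ₂ * (I * ξ * y r * conj (z r)).re)
      (rateK₂ ρ₁ ρ₂ k a m δ ξ (u t) (v t) (z t) (y t) (θ t) G) t := by
  refine (((hasDerivAt_re_mul (hu.star.const_mul (I * ξ)) hv).const_mul ρ₁).add
    ((hasDerivAt_re_mul (hy.const_mul (I * ξ)) hz.star).const_mul ρ₂)).congr_deriv ?_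
  simp only [rateK₂, Complex.star_def, Complex.sq_norm]
  simp only [normSq_apply, map_div₀, map_mul, conj_I, conj_ofReal, pow_two,
    add_re, sub_re, mul_re, mul_im, add_im, sub_im, neg_re, neg_im, I_re, I_im, ofReal_re,
    ofReal_im, conj_re, conj_im, div_re, div_im]
  field_simp
  ring

theorem stmt9_general (ρ₁ ρ₂ ρ₃ k b m δ βt k₁ k₂ b₀ : ℝ)
    (hρ₁ : 0 < ρ₁) (hρ₂ : 0 < ρ₂) (ha : 0 < b - b₀) :
    ∀ ε : ℝ, 0 < ε → ∃ C > 0, ∀ (ξ : ℝ) (g g' : ℝ → ℝ) (v u z y θ : ℝ → ℂ) (η ηt ηs : ℝ → ℝ → ℂ),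
      (∀ s, 0 ≤ s → 0 ≤ g s) →
      (∀ s, 0 ≤ s → HasDerivAt g (g' s) s) →
      (∀ s, 0 ≤ s → -k₁ * g s ≤ g' s ∧ g' s ≤ -k₂ * g s) →
      (b₀ = ∫ s in Set.Ici (0:ℝ), g s) →
      (∀ t, 0 ≤ t → HasDerivAt v (Complex.I * (ξ:ℂ) * u t - y t) t) →
      (∀ t, 0 ≤ t → HasDerivAt u (Complex.I * (k:ℂ) * (ξ:ℂ) * v t / (ρ₁:ℂ)) t) →
      (∀ t, 0 ≤ t → HasDerivAt z (Complex.I * (ξ:ℂ) * y t) t) →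
      (∀ t, 0 ≤ t → HasDerivAt y ((Complex.I * ((b - b₀ : ℝ):ℂ) * (ξ:ℂ) * z t - (m:ℂ) * (ξ:ℂ)^2 * (∫ s in Set.Ici (0:ℝ), (g s : ℂ) * η t s) + (k:ℂ) * v t - Complex.I * (δ:ℂ) * (ξ:ℂ) * θ t) / (ρ₂:ℂ)) t) →
      (∀ t, 0 ≤ t → HasDerivAt θ ((-((βt:ℂ) * (ξ:ℂ)^2 * θ t) - Complex.I * (δ:ℂ) * (ξ:ℂ) * y t) / (ρ₃:ℂ)) t) →
      (∀ t s, 0 ≤ t → 0 ≤ s → HasDerivAt (fun r => η r s) (ηt t s) t) →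
      (∀ t s, 0 ≤ t → 0 ≤ s → HasDerivAt (fun r => η t r) (ηs t s) s) →
      (Continuous (Function.uncurry ηt)) →
      (Continuous (Function.uncurry ηs)) →
      (∀ t s, 0 ≤ t → 0 ≤ s → ηt t s + ηs t s = y t) →
      (∀ t, 0 ≤ t → η t 0 = 0) →
      (∀ t, 0 ≤ t → MeasureTheory.IntegrableOn (fun s => g s * ‖η t s‖^2) (Set.Ici 0)) →
      (∀ t, 0 ≤ t → MeasureTheory.IntegrableOn (fun s => (g s : ℂ) * η t s) (Set.Ici 0)) →
      ∀ t, 0 ≤ t → ∃ d : ℝ,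
        HasDerivAt (fun r => ρ₁ * (Complex.I * (ξ:ℂ) * (starRingEnd ℂ) (u r) * v r).re + ρ₂ * (Complex.I * (ξ:ℂ) * y r * (starRingEnd ℂ) (z r)).re) d t ∧
        d + ρ₁*(1-ε)*ξ^2*‖u t‖^2 + (b - b₀)*(1-ε)*ξ^2*‖z t‖^2 ≤ C*(1+ξ^2)*‖v t‖^2 + C*(1+ξ^2)*‖y t‖^2 + C*ξ^2*‖θ t‖^2 + C*ξ^4*‖∫ s in Set.Ici (0:ℝ), (g s : ℂ) * η t s‖^2 := by
  intro ε hε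
  obtain ⟨C, hC, hbound⟩ := exists_rateK₂_add_le (ρ₂ := ρ₂) (k := k) (m := m) (δ := δ) hρ₁ ha hε
  refine ⟨C, hC, fun ξ g g' v u z y θ η ηt ηs _ _ _ _ hv hu hz hy _ _ _ _ _ _ _ _ _ t ht => ?_⟩
  exact ⟨_, hasDerivAt_K₂ hρ₁.ne' hρ₂.ne' (hv t ht) (hu t ht) (hz t ht) (hy t ht), hbound ..⟩

theorem stmt9 (ρ₁ ρ₂ ρ₃ k b m δ βt k₁ k₂ b₀ : ℝ)
    (hρ₁ : 0 < ρ₁) (hρ₂ : 0 < ρ₂) (hρ₃ : 0 < ρ₃) (hk : 0 < k) (hb : 0 < b)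
    (hm : 0 < m) (hδ : 0 < δ) (hβt : 0 < βt)
    (hk₁₂ : k₂ ≤ k₁) (hk₂ : 0 < k₂) (ha : 0 < b - b₀) :
    ∀ ε : ℝ, 0 < ε → ∃ C > 0, ∀ (ξ : ℝ) (g g' : ℝ → ℝ) (v u z y θ : ℝ → ℂ) (η ηt ηs : ℝ → ℝ → ℂ),
      (∀ s, 0 ≤ s → 0 ≤ g s) →
      (∀ s, 0 ≤ s → HasDerivAt g (g' s) s) →
      (∀ s, 0 ≤ s → -k₁ * g s ≤ g' s ∧ g' s ≤ -k₂ * g s) →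
      (b₀ = ∫ s in Set.Ici (0:ℝ), g s) →
      (∀ t, 0 ≤ t → HasDerivAt v (Complex.I * (ξ:ℂ) * u t - y t) t) →
      (∀ t, 0 ≤ t → HasDerivAt u (Complex.I * (k:ℂ) * (ξ:ℂ) * v t / (ρ₁:ℂ)) t) →
      (∀ t, 0 ≤ t → HasDerivAt z (Complex.I * (ξ:ℂ) * y t) t) →
      (∀ t, 0 ≤ t → HasDerivAt y ((Complex.I * ((b - b₀ : ℝ):ℂ) * (ξ:ℂ) * z t - (m:ℂ) * (ξ:ℂ)^2 * (∫ s in Set.Ici (0:ℝ), (g s : ℂ) * η t s) + (k:ℂ) * v t - Complex.I * (δ:ℂ) * (ξ:ℂ) * θ t) / (ρ₂:ℂ)) t) →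
      (∀ t, 0 ≤ t → HasDerivAt θ ((-((βt:ℂ) * (ξ:ℂ)^2 * θ t) - Complex.I * (δ:ℂ) * (ξ:ℂ) * y t) / (ρ₃:ℂ)) t) →
      (∀ t s, 0 ≤ t → 0 ≤ s → HasDerivAt (fun r => η r s) (ηt t s) t) →
      (∀ t s, 0 ≤ t → 0 ≤ s → HasDerivAt (fun r => η t r) (ηs t s) s) →
      (Continuous (Function.uncurry ηt)) →
      (Continuous (Function.uncurry ηs)) →
      (∀ t s, 0 ≤ t → 0 ≤ s → ηt t s + ηs t s = y t) →
      (∀ t, 0 ≤ t → η t 0 = 0) →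
      (∀ t, 0 ≤ t → MeasureTheory.IntegrableOn (fun s => g s * ‖η t s‖^2) (Set.Ici 0)) →
      (∀ t, 0 ≤ t → MeasureTheory.IntegrableOn (fun s => (g s : ℂ) * η t s) (Set.Ici 0)) →
      ∀ t, 0 ≤ t → ∃ d : ℝ,
        HasDerivAt (fun r => ρ₁ * (Complex.I * (ξ:ℂ) * (starRingEnd ℂ) (u r) * v r).re + ρ₂ * (Complex.I * (ξ:ℂ) * y r * (starRingEnd ℂ) (z r)).re) d t ∧
        d + ρ₁*(1-ε)*ξ^2*‖u t‖^2 + (b - b₀)*(1-ε)*ξ^2*‖z t‖^2 ≤ C*(1+ξ^2)*‖v t‖^2 + C*(1+ξ^2)*‖y t‖^2 + C*ξ^2*‖θ t‖^2 + C*ξ^4*‖∫ s in Set.Ici (0:ℝ), (g s : ℂ) * η t s‖^2 :=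
  stmt9_general ρ₁ ρ₂ ρ₃ k b m δ βt k₁ k₂ b₀ hρ₁ hρ₂ ha
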